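/- arXiv:0706.1751 — 4 statements merged into one kernel-verified Lean document; each statement's English description precedes it below -/
import Mathlib

section
/- Let C_0 ⊆ GF(q^m)^r be a linear code, and for s ≥ 0 let C_s = C_0 × GF(q^m)^s ⊆ GF(q^m)^{r+s}. If B_{0,i} denotes the number of codewords of rank weight i in C_0, then the number B_{s,u} of codewords of rank weight u in C_s is B_{s,u} = Σ_{i=0}^u q^{is} B_{0,i} [s choose u-i]_q α(m-i, u-i). -/
/-!
Appending a coordinate `x` to a vector `w` of rank weight `t` keeps the rank weight `t` when `x`
lies in the `GF(q)`-span of the coordinates of `w` (`q^t` choices) and raises it to `t + 1`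
otherwise (`q^m - q^t` choices). Splitting off the last coordinate therefore gives
`B_{s+1,u} = q^u B_{s,u} + (q^m - q^(u-1)) B_{s,u-1}`. By the `q`-Pascal identity
`[s+1, k+1]_q = q^(k+1) [s, k+1]_q + [s, k]_q` the right-hand side obeys the same recursion, and
both sides equal `B_{0,u}` at `s = 0`.
-/

noncomputable section

/-- `alphaQ q a u = ∏_{i=0}^{u-1} (q^a - q^i)`, with integer exponent `a`. -/
def alphaQ (q : ℚ) (a : ℤ) (u : ℕ) : ℚ :=
  ∏ i ∈ Finset.range u, (q ^ a - q ^ (i : ℤ))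

/-- The Gaussian binomial `[a choose b]_q = α(a,b)/α(b,b)`. -/
def gaussQ (q : ℚ) (a b : ℕ) : ℚ := alphaQ q a b / alphaQ q b b

/-- `sig l = l(l-1)/2`. -/
def sig (l : ℕ) : ℕ := l * (l - 1) / 2

/-- The rank weight of a vector with coordinates in `Fqm`: the dimension over the base
field `Fq` of the `Fq`-linear span of its coordinates. -/
def rankWeight (Fq : Type*) [Field Fq] {Fqm : Type*} [Field Fqm] [Algebra Fq Fqm]
    {n : ℕ} (x : Fin n → Fqm) : ℕ :=
  Module.finrank Fq (Submodule.span Fq (Set.range x))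

open Finset Module

lemma alphaQ_zero (q : ℚ) (a : ℤ) : alphaQ q a 0 = 1 := by simp [alphaQ]

lemma alphaQ_succ (q : ℚ) (a : ℤ) (k : ℕ) :
    alphaQ q a (k + 1) = alphaQ q a k * (q ^ a - q ^ (k : ℤ)) :=
  prod_range_succ _ _

lemma alphaQ_add_one_succ {q : ℚ} (hq : q ≠ 0) (a : ℤ) (k : ℕ) :
    alphaQ q (a + 1) (k + 1) = (q ^ (a + 1) - 1) * q ^ k * alphaQ q a k := by
  have hshift : ∀ i : ℕ, q ^ (a + 1) - q ^ ((i + 1 : ℕ) : ℤ) = q * (q ^ a - q ^ (i : ℤ)) := by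
    intro i
    rw [Nat.cast_succ, zpow_add_one₀ hq, zpow_add_one₀ hq]
    ring
  simp only [alphaQ, prod_range_succ', hshift, prod_mul_distrib, prod_const, card_range,
    Nat.cast_zero, zpow_zero]
  ring

lemma alphaQ_self_pos {q : ℚ} (hq : 1 < q) (k : ℕ) : 0 < alphaQ q k k :=
  prod_pos fun i hi => by
    simpa [zpow_natCast] using pow_lt_pow_right₀ hq (mem_range.1 hi)

lemma gaussQ_zero_right (q : ℚ) (a : ℕ) : gaussQ q a 0 = 1 := by
  simp [gaussQ, alphaQ_zero]

lemma gaussQ_zero_left (q : ℚ) {b : ℕ} (hb : b ≠ 0) : gaussQ q 0 b = 0 := by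
  have : alphaQ q 0 b = 0 :=
    prod_eq_zero (mem_range.2 (Nat.pos_of_ne_zero hb)) (by simp)
  simp [gaussQ, this]

lemma gaussQ_succ_succ {q : ℚ} (hq : 1 < q) (s k : ℕ) :
    gaussQ q (s + 1) (k + 1) = q ^ (k + 1) * gaussQ q s (k + 1) + gaussQ q s k := by
  have hq0 : q ≠ 0 := by positivity
  have hk : alphaQ q k k ≠ 0 := (alphaQ_self_pos hq k).ne'
  have hk1 : q ^ (k + 1) - 1 ≠ 0 := sub_ne_zero.2 (one_lt_pow₀ hq k.succ_ne_zero).ne'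
  have hqk : q ^ k ≠ 0 := pow_ne_zero _ hq0
  simp only [gaussQ, Nat.cast_succ, alphaQ_add_one_succ hq0, alphaQ_succ]
  simp only [← Nat.cast_succ, zpow_natCast, Nat.succ_eq_add_one]
  field_simp
  ring

def rankDistFormula (q : ℚ) (m : ℕ) (b : ℕ → ℚ) (s u : ℕ) : ℚ :=
  ∑ i ∈ range (u + 1), q ^ (i * s) * b i * gaussQ q s (u - i) * alphaQ q ((m : ℤ) - i) (u - i)

lemma rankDistFormula_zero_left (q : ℚ) (m : ℕ) (b : ℕ → ℚ) (u : ℕ) :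
    rankDistFormula q m b 0 u = b u := by
  rw [rankDistFormula, sum_range_succ, sum_eq_zero fun i hi => by
    rw [gaussQ_zero_left q (Nat.sub_ne_zero_of_lt (mem_range.1 hi)), mul_zero, zero_mul]]
  simp [gaussQ_zero_right, alphaQ_zero]

lemma rankDistFormula_zero_right (q : ℚ) (m : ℕ) (b : ℕ → ℚ) (s : ℕ) :
    rankDistFormula q m b s 0 = b 0 := by
  simp [rankDistFormula, gaussQ_zero_right, alphaQ_zero]

lemma rankDistFormula_succ_succ {q : ℚ} (hq : 1 < q) (m : ℕ) (b : ℕ → ℚ) (s v : ℕ) :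
    rankDistFormula q m b (s + 1) (v + 1) =
      q ^ (v + 1) * rankDistFormula q m b s (v + 1) +
        (q ^ m - q ^ v) * rankDistFormula q m b s v := by
  have hq0 : q ≠ 0 := by positivity
  have hterm : ∀ i ∈ range (v + 1),
      q ^ (i * (s + 1)) * b i * gaussQ q (s + 1) (v + 1 - i) * alphaQ q (m - i) (v + 1 - i) =
        q ^ (v + 1) * (q ^ (i * s) * b i * gaussQ q s (v + 1 - i) * alphaQ q (m - i) (v + 1 - i)) +
          (q ^ m - q ^ v) * (q ^ (i * s) * b i * gaussQ q s (v - i) * alphaQ q (m - i) (v - i)) :=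
      by
    intro i hi
    obtain ⟨k, rfl⟩ := Nat.exists_eq_add_of_le (Nat.lt_succ_iff.1 (mem_range.1 hi))
    rw [show i + k + 1 - i = k + 1 by omega, show i + k - i = k by omega, gaussQ_succ_succ hq,
      alphaQ_succ, zpow_sub₀ hq0, zpow_natCast, zpow_natCast, zpow_natCast]
    field_simp
    ring
  rw [rankDistFormula, sum_range_succ, sum_congr rfl hterm, sum_add_distrib, ← mul_sum, ← mul_sum,
    rankDistFormula, sum_range_succ _ (v + 1), rankDistFormula]
  simp only [Nat.sub_self, gaussQ_zero_right, alphaQ_zero]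
  ring

lemma natCard_subtype_eq_sum {α : Type*} [Fintype α] (p : α → Prop) [DecidablePred p] :
    (Nat.card {x // p x} : ℚ) = ∑ x, if p x then 1 else 0 := by
  rw [Nat.card_eq_fintype_card, Fintype.card_subtype, natCast_card_filter]

section RankWeight

variable {K L : Type*} [Field K] [Field L] [Algebra K L] {n : ℕ}

lemma rankWeight_snoc_of_mem (w : Fin n → L) {x : L} (hx : x ∈ Submodule.span K (Set.range w)) :
    rankWeight K (Fin.snoc w x) = rankWeight K w := by
  rw [rankWeight, Fin.range_snoc, Submodule.span_insert_eq_span hx, rankWeight]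

lemma rankWeight_snoc_of_notMem [FiniteDimensional K L] (w : Fin n → L) {x : L}
    (hx : x ∉ Submodule.span K (Set.range w)) :
    rankWeight K (Fin.snoc w x) = rankWeight K w + 1 := by
  rw [rankWeight, Fin.range_snoc, Submodule.span_insert, sup_comm,
    Submodule.finrank_sup_span_singleton hx, rankWeight]

variable [Fintype K] [Fintype L]

lemma sum_rankWeight_snoc_eq (w : Fin n → L) (u : ℕ) :
    ∑ x : L, (if rankWeight K (Fin.snoc w x) = u then (1 : ℚ) else 0) =
      (if rankWeight K w = u then (Fintype.card K : ℚ) ^ u else 0) +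
        (if rankWeight K w + 1 = u then
          (Fintype.card L : ℚ) - Fintype.card K ^ rankWeight K w else 0) := by
  classical
  set W := Submodule.span K (Set.range w)
  have hW : Fintype.card W = Fintype.card K ^ rankWeight K w := card_eq_pow_finrank
  have hsplit : ∀ x : L, (if rankWeight K (Fin.snoc w x) = u then (1 : ℚ) else 0) =
      if x ∈ W then (if rankWeight K w = u then 1 else 0)
      else (if rankWeight K w + 1 = u then 1 else 0) := by
    intro x
    by_cases hx : x ∈ W
    · simp [hx, rankWeight_snoc_of_mem w hx]
    · simp [hx, rankWeight_snoc_of_notMem w hx]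
  have hmem : (#{x | x ∈ W} : ℚ) = Fintype.card K ^ rankWeight K w := by
    rw [← Nat.cast_pow, ← hW, ← Fintype.card_subtype]
  have hnotMem : (#{x | x ∉ W} : ℚ) = Fintype.card L - Fintype.card K ^ rankWeight K w := by
    rw [← hmem, eq_sub_iff_add_eq', ← Nat.cast_add, card_filter_add_card_filter_not]
    rfl
  rw [sum_congr rfl fun x _ => hsplit x, sum_ite, sum_const, sum_const, nsmul_eq_mul,
    nsmul_eq_mul, hmem, hnotMem]
  split_ifs with h1 h2 h2 <;> first | omega | simp [h1]

-- At `u = 0` the last count vanishes, so the truncated `u - 1` does no harm.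
lemma natCard_init_rankWeight (P : (Fin n → L) → Prop) (u : ℕ) :
    (Nat.card {w : Fin (n + 1) → L // P (Fin.init w) ∧ rankWeight K w = u} : ℚ) =
      Fintype.card K ^ u * Nat.card {a // P a ∧ rankWeight K a = u} +
        (Fintype.card L - Fintype.card K ^ (u - 1)) *
          Nat.card {a // P a ∧ rankWeight K a + 1 = u} := by
  classical
  have hfiber : ∀ a : Fin n → L,
      ∑ x : L, (if P a ∧ rankWeight K (Fin.snoc a x) = u then (1 : ℚ) else 0) =
        Fintype.card K ^ u * (if P a ∧ rankWeight K a = u then 1 else 0) +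
          (Fintype.card L - Fintype.card K ^ (u - 1)) *
            (if P a ∧ rankWeight K a + 1 = u then 1 else 0) := by
    intro a
    by_cases hP : P a
    · simp only [hP, true_and, sum_rankWeight_snoc_eq]
      split_ifs with h1 h2 <;> first | omega | (subst u; simp) | simp
    · simp [hP]
  rw [natCard_subtype_eq_sum, natCard_subtype_eq_sum, natCard_subtype_eq_sum, mul_sum, mul_sum,
    ← sum_add_distrib, ← (Fin.snocEquiv fun _ => L).sum_comp, Fintype.sum_prod_type, sum_comm]
  simp only [Fin.snocEquiv, Equiv.coe_fn_mk, Fin.init_snoc]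
  exact sum_congr rfl fun a _ => hfiber a

theorem natCard_prefix_mem_rankWeight {r : ℕ} (S : Set (Fin r → L)) (s u : ℕ) :
    (Nat.card {w : Fin (r + s) → L //
        (fun i : Fin r => w (Fin.castAdd s i)) ∈ S ∧ rankWeight K w = u} : ℚ) =
      rankDistFormula (Fintype.card K) (finrank K L)
        (fun i => Nat.card {c : Fin r → L // c ∈ S ∧ rankWeight K c = i}) s u := by
  induction s generalizing u with
  | zero => rw [rankDistFormula_zero_left]; rfl
  | succ s ih =>
    have hq : (1 : ℚ) < Fintype.card K := by exact_mod_cast Fintype.one_lt_card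
    -- `Fin.init w ∘ Fin.castAdd s` is definitionally `w ∘ Fin.castAdd (s + 1)`.
    have hlast := natCard_init_rankWeight (K := K) (fun a => (fun i => a (Fin.castAdd s i)) ∈ S) u
    refine hlast.trans ?_
    cases u with
    | zero => simp [ih, rankDistFormula_zero_right]
    | succ v =>
      simp only [Nat.add_right_cancel_iff, Nat.add_sub_cancel, ih,
        card_eq_pow_finrank (K := K) (V := L), Nat.cast_pow]
      rw [rankDistFormula_succ_succ hq]

end RankWeight

/-- Rank weight distribution of the cartesian product `C_s = C_0 × GF(q^m)^s`:
`B_{s,u} = ∑_{i=0}^u q^(is) B_{0,i} [s, u-i]_q α(m-i, u-i)`. -/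
theorem cartesian_product_rank_distribution
    (Fq Fqm : Type*) [Field Fq] [Field Fqm] [Fintype Fq] [Fintype Fqm] [Algebra Fq Fqm]
    (q m r : ℕ) (hq : Fintype.card Fq = q) (hm : Module.finrank Fq Fqm = m)
    (C₀ : Submodule Fqm (Fin r → Fqm)) (s : ℕ)
    (B₀ : ℕ → ℕ)
    (hB₀ : ∀ i, B₀ i = Nat.card {c : Fin r → Fqm // c ∈ C₀ ∧ rankWeight Fq c = i})
    (u : ℕ) :
    (Nat.card {w : Fin (r + s) → Fqm //
        (fun i : Fin r => w (Fin.castAdd s i)) ∈ C₀ ∧ rankWeight Fq w = u} : ℚ) =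
      ∑ i ∈ Finset.range (u + 1), (q : ℚ) ^ (i * s) * (B₀ i : ℚ) *
        gaussQ q s (u - i) * alphaQ (q : ℚ) ((m : ℤ) - i) (u - i) := by
  subst hq hm
  simp only [hB₀]
  exact natCard_prefix_mem_rankWeight (C₀ : Set (Fin r → Fqm)) s u
end
end

section
/- For 0 ≤ ν ≤ l, the ν-th q-derivative of x^l with respect to x is β(l,ν) x^{l-ν}; moreover, the ν-th q-derivative of a_l(x,y;m) = [x+(q^m-1)y]^{[l]} equals β(l,ν) a_{l-ν}(x,y;m), and the ν-th q-derivative of b_l(x,y;m) = (x-y)^{[l]} equals β(l,ν) b_{l-ν}(x,y;m). -/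
noncomputable section

/-- `betaQ q a u = ∏_{i=0}^{u-1} (q^(a-i) - 1)/(q - 1)` (natural subtraction in the
exponent). -/
def betaQ (q : ℚ) (a u : ℕ) : ℚ :=
  ∏ i ∈ Finset.range u, (q ^ (a - i) - 1) / (q - 1)

/-- A homogeneous polynomial in `x, y` of degree `deg`, whose coefficients depend on an
integer parameter `m`: `coeff m i` is the coefficient of `y^i x^(deg - i)` (coefficients
with `i > deg` are regarded as zero). -/
structure QPoly where
  deg : ℕ
  coeff : ℤ → ℕ → ℚ

/-- The q-product `a * b`: a homogeneous polynomial of degree `r + s` whose coefficient of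
`y^u x^(r+s-u)` is `∑_{i=0}^u q^(i·s) aᵢ(m) b_{u-i}(m-i)`, where `s` is the degree of `b`. -/
def qMul (q : ℚ) (a b : QPoly) : QPoly :=
  ⟨a.deg + b.deg, fun m u =>
    ∑ i ∈ Finset.range (u + 1), q ^ (i * b.deg) * a.coeff m i * b.coeff (m - i) (u - i)⟩

/-- The constant polynomial `1`. -/
def qOne : QPoly := ⟨0, fun _ u => if u = 0 then 1 else 0⟩

/-- The `l`-th q-power: `a^[0] = 1` and `a^[l] = a^[l-1] * a`. -/
def qPow (q : ℚ) (a : QPoly) : ℕ → QPoly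
  | 0 => qOne
  | l + 1 => qMul q (qPow q a l) a

/-- Evaluation of a homogeneous polynomial at `(x, y)`, with parameter `m`. -/
def QPoly.eval (a : QPoly) (m : ℤ) (x y : ℚ) : ℚ :=
  ∑ u ∈ Finset.range (a.deg + 1), a.coeff m u * y ^ u * x ^ (a.deg - u)

/-- The homogeneous polynomial `x + (q^m - 1) y` of degree 1. -/
def polyXA (q : ℚ) : QPoly :=
  ⟨1, fun m u => if u = 0 then 1 else if u = 1 then q ^ m - 1 else 0⟩

/-- The homogeneous polynomial `x - y` of degree 1. -/
def polyXB : QPoly :=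
  ⟨1, fun _ u => if u = 0 then 1 else if u = 1 then -1 else 0⟩

/-- The q-derivative (with respect to `x`) of a one-variable function. -/
def qDeriv (q : ℚ) (f : ℚ → ℚ) : ℚ → ℚ :=
  fun x => (f (q * x) - f x) / ((q - 1) * x)

/-- The q-derivative with respect to `x` of a two-variable function `f(x, y)`. -/
def qDerivX (q : ℚ) (f : ℚ → ℚ → ℚ) : ℚ → ℚ → ℚ :=
  fun x y => (f (q * x) y - f x y) / ((q - 1) * x)

namespace QDA

variable {q : ℚ}

/-- numerator product -/
def N (q : ℚ) (l u : ℕ) : ℚ := ∏ i ∈ Finset.range u, (q ^ ((l : ℤ) - i) - 1)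

/-- scaled Gaussian binomial -/
def G (q : ℚ) (l u : ℕ) : ℚ := N q l u / N q u u

def E (u : ℕ) : ℕ := ∑ i ∈ Finset.range u, i

def W (w : ℤ → ℚ) (m : ℤ) (u : ℕ) : ℚ := ∏ i ∈ Finset.range u, w (m - i)

lemma hq0 (hq : 1 < q) : (0:ℚ) < q := lt_trans one_pos hq

lemma N_peel_front (l u : ℕ) : N q (l+1) (u+1) = N q l u * (q ^ ((l:ℤ)+1) - 1) := by
  rw [N, Finset.prod_range_succ', N]
  congr 1
  all_goals first
    | (apply Finset.prod_congr rfl; intro i _; congr 2; push_cast; try ring)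
    | (congr 2; push_cast; try ring)

lemma N_peel_back (l u : ℕ) : N q l (u+1) = N q l u * (q ^ ((l:ℤ) - u) - 1) :=
  Finset.prod_range_succ _ _

lemma N_zero {l u : ℕ} (h : l < u) : N q l u = 0 := by
  exact Finset.prod_eq_zero (Finset.mem_range.2 h) (by simp)

lemma N_diag_ne (hq : 1 < q) (u : ℕ) : N q u u ≠ 0 := by
  apply Finset.prod_ne_zero_iff.2
  intro i hi
  have hi' : (0:ℤ) < (u:ℤ) - i := by
    have := Finset.mem_range.1 hi; omega
  have : (1:ℚ) < q ^ ((u:ℤ) - i) := one_lt_zpow₀ hq hi'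
  intro hc
  rw [sub_eq_zero] at hc
  rw [hc] at this
  exact lt_irrefl _ this

lemma G_zero {l u : ℕ} (h : l < u) : G q l u = 0 := by
  rw [G, N_zero h, zero_div]

lemma G_nil (l : ℕ) : G q l 0 = 1 := by simp [G, N]

lemma fac_ne (hq : 1 < q) (k : ℕ) : q ^ ((k:ℤ)+1) - 1 ≠ 0 := by
  have : (1:ℚ) < q ^ ((k:ℤ)+1) := one_lt_zpow₀ hq (by omega)
  intro hc; rw [sub_eq_zero] at hc; rw [hc] at this; exact lt_irrefl _ this

lemma G_pascal (hq : 1 < q) (l u : ℕ) :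
    G q (l+1) (u+1) = q ^ ((u:ℤ)+1) * G q l (u+1) + G q l u := by
  have hD1 := N_diag_ne hq (u+1)
  have hD0 := N_diag_ne hq u
  have hf := fac_ne hq u
  have hDrec : N q (u+1) (u+1) = N q u u * (q ^ ((u:ℤ)+1) - 1) := N_peel_front u u
  have hz : q ^ ((u:ℤ)+1) * q ^ ((l:ℤ) - u) = q ^ ((l:ℤ)+1) := by
    rw [← zpow_add₀ (ne_of_gt (hq0 hq))]; congr 1; ring
  have hkey : N q (l+1) (u+1)
      = q ^ ((u:ℤ)+1) * N q l (u+1) + N q l u * (q ^ ((u:ℤ)+1) - 1) := by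
    rw [N_peel_front, N_peel_back]
    linear_combination (-(N q l u)) * hz
  rw [G, G, G, hkey, hDrec]
  field_simp

lemma G_ratio (hq : 1 < q) (l u : ℕ) :
    G q (l+1) u * (q ^ (((l:ℤ)+1) - u) - 1) = (q ^ ((l:ℤ)+1) - 1) * G q l u := by
  have h1 : N q (l+1) u * (q ^ (((l:ℤ)+1) - u) - 1) = (q ^ ((l:ℤ)+1) - 1) * N q l u := by
    have a : N q (l+1) (u+1) = N q (l+1) u * (q ^ (((l+1:ℕ):ℤ) - u) - 1) := N_peel_back (l+1) u
    have b : N q (l+1) (u+1) = N q l u * (q ^ ((l:ℤ)+1) - 1) := N_peel_front l u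
    push_cast at a
    rw [a] at b
    linarith [b]
  rw [G, G, div_mul_eq_mul_div, h1, mul_div_assoc]

section Poly

variable {p : QPoly} {w : ℤ → ℚ}

lemma qPow_deg (hd : p.deg = 1) (l : ℕ) : (qPow q p l).deg = l := by
  induction l with
  | zero => rfl
  | succ n ih => show (qPow q p n).deg + p.deg = n + 1; rw [ih, hd]

lemma qPow_coeff (hq : 1 < q) (hd : p.deg = 1)
    (h0 : ∀ m, p.coeff m 0 = 1) (h1 : ∀ m, p.coeff m 1 = w m)
    (h2 : ∀ m u, 2 ≤ u → p.coeff m u = 0) (l : ℕ) :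
    ∀ m u, (qPow q p l).coeff m u = q ^ (E u) * G q l u * W w m u := by
  induction l with
  | zero =>
    intro m u
    show (if u = 0 then (1:ℚ) else 0) = _
    cases u with
    | zero => simp [E, W, G_nil]
    | succ s => rw [G_zero (Nat.succ_pos s)]; simp
  | succ n ih =>
    intro m u
    show (∑ i ∈ Finset.range (u+1),
        q ^ (i * p.deg) * (qPow q p n).coeff m i * p.coeff (m - i) (u - i)) = _
    cases u with
    | zero =>
      rw [Finset.sum_range_one, ih, h0]
      simp [E, W, G_nil]
    | succ s =>
      rw [Finset.sum_range_succ, Finset.sum_range_succ]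
      have hz : ∑ i ∈ Finset.range s,
          q ^ (i * p.deg) * (qPow q p n).coeff m i * p.coeff (m - i) (s + 1 - i) = 0 := by
        apply Finset.sum_eq_zero; intro i hi
        rw [h2 _ _ (by have := Finset.mem_range.1 hi; omega), mul_zero]
      have e1 : s + 1 - s = 1 := by omega
      have e2 : s + 1 - (s + 1) = 0 := by omega
      rw [hz, zero_add, ih, ih, hd, e1, e2, h1, h0]
      have hE : E (s+1) = E s + s := Finset.sum_range_succ _ _
      have hW : W w m (s+1) = W w m s * w (m - s) := Finset.prod_range_succ _ _
      have hzp : (q:ℚ) ^ ((s:ℤ)+1) = q ^ (s+1 : ℕ) := by norm_cast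
      have hP := G_pascal hq n s
      rw [hzp] at hP
      rw [hW, hE, hP, pow_add, mul_one, mul_one]
      ring

lemma eval_qPow (hq : 1 < q) (hd : p.deg = 1)
    (h0 : ∀ m, p.coeff m 0 = 1) (h1 : ∀ m, p.coeff m 1 = w m)
    (h2 : ∀ m u, 2 ≤ u → p.coeff m u = 0) (l : ℕ) (m : ℤ) (x y : ℚ) :
    (qPow q p l).eval m x y
      = ∑ u ∈ Finset.range (l+1), q ^ (E u) * G q l u * W w m u * y ^ u * x ^ (l - u) := by
  rw [QPoly.eval, qPow_deg hd]
  exact Finset.sum_congr rfl fun u _ => by rw [qPow_coeff hq hd h0 h1 h2]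

lemma step (hq : 1 < q) (hd : p.deg = 1)
    (h0 : ∀ m, p.coeff m 0 = 1) (h1 : ∀ m, p.coeff m 1 = w m)
    (h2 : ∀ m u, 2 ≤ u → p.coeff m u = 0) (l : ℕ) (m : ℤ) (x y : ℚ) (hx : x ≠ 0) :
    qDerivX q (fun s t => (qPow q p (l+1)).eval m s t) x y
      = betaQ q (l+1) 1 * (qPow q p l).eval m x y := by
  have hq1 : q - 1 ≠ 0 := sub_ne_zero.2 (ne_of_gt hq)
  show ((qPow q p (l+1)).eval m (q * x) y - (qPow q p (l+1)).eval m x y) / ((q-1) * x)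
      = betaQ q (l+1) 1 * (qPow q p l).eval m x y
  rw [eval_qPow hq hd h0 h1 h2, eval_qPow hq hd h0 h1 h2, eval_qPow hq hd h0 h1 h2,
    ← Finset.sum_sub_distrib]
  have hnum : ∑ u ∈ Finset.range (l+1+1),
      (q ^ E u * G q (l+1) u * W w m u * y ^ u * (q*x) ^ (l+1-u)
        - q ^ E u * G q (l+1) u * W w m u * y ^ u * x ^ (l+1-u))
      = (q ^ (l+1) - 1) * x
        * ∑ u ∈ Finset.range (l+1), q ^ E u * G q l u * W w m u * y ^ u * x ^ (l-u) := by
    rw [Finset.sum_range_succ]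
    have hlast : q ^ E (l+1) * G q (l+1) (l+1) * W w m (l+1) * y ^ (l+1) * (q*x) ^ (l+1-(l+1))
        - q ^ E (l+1) * G q (l+1) (l+1) * W w m (l+1) * y ^ (l+1) * x ^ (l+1-(l+1)) = 0 := by
      rw [Nat.sub_self]; ring
    rw [hlast, add_zero, Finset.mul_sum]
    apply Finset.sum_congr rfl
    intro u hu
    have hu' : u ≤ l := by have := Finset.mem_range.1 hu; omega
    have hsub : l + 1 - u = (l - u) + 1 := by omega
    have hz1 : (q:ℚ) ^ (l+1-u) = q ^ (((l:ℤ)+1) - u) := by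
      rw [← zpow_natCast, Nat.cast_sub (by omega : u ≤ l+1)]; norm_num
    have hz2 : (q:ℚ) ^ (l+1) = q ^ ((l:ℤ)+1) := by norm_cast
    have hratio := G_ratio hq l u
    rw [mul_pow, hz1, hz2, hsub, pow_succ]
    linear_combination (q ^ E u * W w m u * y ^ u * x ^ (l-u) * x) * hratio
  rw [hnum]
  have hb : betaQ q (l+1) 1 = (q ^ (l+1) - 1) / (q - 1) := by
    rw [betaQ, Finset.prod_range_one, Nat.sub_zero]
  rw [hb]
  field_simp

lemma iter_congr (hq0 : q ≠ 0) :
    ∀ (ν : ℕ) (f g : ℚ → ℚ → ℚ), (∀ x, x ≠ 0 → ∀ y, f x y = g x y) →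
      ∀ x, x ≠ 0 → ∀ y, (qDerivX q)^[ν] f x y = (qDerivX q)^[ν] g x y := by
  intro ν
  induction ν with
  | zero => intro f g h x hx y; exact h x hx y
  | succ n ih =>
    intro f g h x hx y
    rw [Function.iterate_succ_apply', Function.iterate_succ_apply']
    show ((qDerivX q)^[n] f (q*x) y - (qDerivX q)^[n] f x y) / ((q-1)*x)
      = ((qDerivX q)^[n] g (q*x) y - (qDerivX q)^[n] g x y) / ((q-1)*x)
    rw [ih f g h (q*x) (mul_ne_zero hq0 hx) y, ih f g h x hx y]

lemma qDerivX_smul (c : ℚ) (g : ℚ → ℚ → ℚ) :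
    qDerivX q (fun s t => c * g s t) = fun x y => c * qDerivX q g x y := by
  funext x y
  show (c * g (q*x) y - c * g x y) / ((q-1)*x) = c * ((g (q*x) y - g x y) / ((q-1)*x))
  ring

lemma iter_smul : ∀ (ν : ℕ) (c : ℚ) (g : ℚ → ℚ → ℚ) (x y : ℚ),
    (qDerivX q)^[ν] (fun s t => c * g s t) x y = c * (qDerivX q)^[ν] g x y := by
  intro ν
  induction ν with
  | zero => intros; rfl
  | succ n ih =>
    intro c g x y
    rw [Function.iterate_succ_apply, Function.iterate_succ_apply, qDerivX_smul]
    exact ih c (qDerivX q g) x y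

lemma betaQ_succ (l ν : ℕ) :
    betaQ q (l+1) (ν+1) = betaQ q (l+1) 1 * betaQ q l ν := by
  rw [betaQ, betaQ, betaQ, Finset.prod_range_one, Finset.prod_range_succ']
  simp only [Nat.succ_sub_succ, Nat.sub_zero]
  ring

lemma main (hq : 1 < q) (hd : p.deg = 1)
    (h0 : ∀ m, p.coeff m 0 = 1) (h1 : ∀ m, p.coeff m 1 = w m)
    (h2 : ∀ m u, 2 ≤ u → p.coeff m u = 0) :
    ∀ (ν l : ℕ), ν ≤ l → ∀ (m : ℤ) (x y : ℚ), x ≠ 0 →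
      (qDerivX q)^[ν] (fun s t => (qPow q p l).eval m s t) x y
        = betaQ q l ν * (qPow q p (l-ν)).eval m x y := by
  intro ν
  induction ν with
  | zero =>
    intro l _ m x y hx
    simp [betaQ]
  | succ n ih =>
    intro l hl m x y hx
    obtain ⟨l', rfl⟩ : ∃ l', l = l'+1 := ⟨l-1, by omega⟩
    rw [Function.iterate_succ_apply]
    have hcong := iter_congr (ne_of_gt (hq0 hq)) n
      (qDerivX q (fun s t => (qPow q p (l'+1)).eval m s t))
      (fun s t => betaQ q (l'+1) 1 * (qPow q p l').eval m s t)
      (fun x hx y => step hq hd h0 h1 h2 l' m x y hx) x hx y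
    rw [hcong, iter_smul, ih l' (by omega) m x y hx, betaQ_succ l' n]
    have : l' + 1 - (n+1) = l' - n := by omega
    rw [this]; ring

end Poly

/- one-variable versions -/

lemma step1 (hq : 1 < q) (l : ℕ) (x : ℚ) (hx : x ≠ 0) :
    qDeriv q (fun t => t ^ (l+1)) x = betaQ q (l+1) 1 * x ^ l := by
  have hq1 : q - 1 ≠ 0 := sub_ne_zero.2 (ne_of_gt hq)
  show ((q * x) ^ (l+1) - x ^ (l+1)) / ((q-1)*x) = betaQ q (l+1) 1 * x ^ l
  have hb : betaQ q (l+1) 1 = (q ^ (l+1) - 1) / (q - 1) := by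
    rw [betaQ, Finset.prod_range_one, Nat.sub_zero]
  rw [hb, mul_pow, pow_succ]
  field_simp
  ring

lemma iter_congr1 (hq0 : q ≠ 0) :
    ∀ (ν : ℕ) (f g : ℚ → ℚ), (∀ x, x ≠ 0 → f x = g x) →
      ∀ x, x ≠ 0 → (qDeriv q)^[ν] f x = (qDeriv q)^[ν] g x := by
  intro ν
  induction ν with
  | zero => intro f g h x hx; exact h x hx
  | succ n ih =>
    intro f g h x hx
    rw [Function.iterate_succ_apply', Function.iterate_succ_apply']
    show ((qDeriv q)^[n] f (q*x) - (qDeriv q)^[n] f x) / ((q-1)*x)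
      = ((qDeriv q)^[n] g (q*x) - (qDeriv q)^[n] g x) / ((q-1)*x)
    rw [ih f g h (q*x) (mul_ne_zero hq0 hx), ih f g h x hx]

lemma qDeriv_smul (c : ℚ) (g : ℚ → ℚ) :
    qDeriv q (fun t => c * g t) = fun x => c * qDeriv q g x := by
  funext x
  show (c * g (q*x) - c * g x) / ((q-1)*x) = c * ((g (q*x) - g x) / ((q-1)*x))
  ring

lemma iter_smul1 : ∀ (ν : ℕ) (c : ℚ) (g : ℚ → ℚ) (x : ℚ),
    (qDeriv q)^[ν] (fun t => c * g t) x = c * (qDeriv q)^[ν] g x := by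
  intro ν
  induction ν with
  | zero => intros; rfl
  | succ n ih =>
    intro c g x
    rw [Function.iterate_succ_apply, Function.iterate_succ_apply, qDeriv_smul]
    exact ih c (qDeriv q g) x

lemma main1 (hq : 1 < q) :
    ∀ (ν l : ℕ), ν ≤ l → ∀ x : ℚ, x ≠ 0 →
      (qDeriv q)^[ν] (fun t => t ^ l) x = betaQ q l ν * x ^ (l - ν) := by
  intro ν
  induction ν with
  | zero => intro l _ x hx; simp [betaQ]
  | succ n ih =>
    intro l hl x hx
    obtain ⟨l', rfl⟩ : ∃ l', l = l'+1 := ⟨l-1, by omega⟩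
    rw [Function.iterate_succ_apply]
    have hcong := iter_congr1 (ne_of_gt (hq0 hq)) n
      (qDeriv q (fun t => t ^ (l'+1)))
      (fun t => betaQ q (l'+1) 1 * t ^ l')
      (fun x hx => step1 hq l' x hx) x hx
    rw [hcong, iter_smul1, ih l' (by omega) x hx, betaQ_succ l' n]
    have : l' + 1 - (n+1) = l' - n := by omega
    rw [this]; ring

end QDA


/-- For `0 ≤ ν ≤ l`: the ν-th q-derivative of `x^l` is `β(l,ν) x^(l-ν)`; the ν-th
q-derivative of `a_l(x,y;m) = [x+(q^m-1)y]^[l]` is `β(l,ν) a_{l-ν}(x,y;m)`; and the ν-th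
q-derivative of `b_l(x,y;m) = (x-y)^[l]` is `β(l,ν) b_{l-ν}(x,y;m)`. -/
theorem q_derivative_of_basic_polynomials (q : ℕ) (hq : 2 ≤ q) :
    (∀ l ν : ℕ, ν ≤ l → ∀ x : ℚ, x ≠ 0 →
      (qDeriv (q : ℚ))^[ν] (fun t => t ^ l) x = betaQ (q : ℚ) l ν * x ^ (l - ν)) ∧
    (∀ l ν : ℕ, ν ≤ l → ∀ (m : ℤ) (x y : ℚ), x ≠ 0 →
      (qDerivX (q : ℚ))^[ν] (fun s t => (qPow (q : ℚ) (polyXA (q : ℚ)) l).eval m s t) x y =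
        betaQ (q : ℚ) l ν * (qPow (q : ℚ) (polyXA (q : ℚ)) (l - ν)).eval m x y) ∧
    (∀ l ν : ℕ, ν ≤ l → ∀ (m : ℤ) (x y : ℚ), x ≠ 0 →
      (qDerivX (q : ℚ))^[ν] (fun s t => (qPow (q : ℚ) polyXB l).eval m s t) x y =
        betaQ (q : ℚ) l ν * (qPow (q : ℚ) polyXB (l - ν)).eval m x y) := by
  have hq1 : 1 < q := by omega
  have hq' : (1:ℚ) < (q:ℚ) := by exact_mod_cast hq1
  refine ⟨fun l nu h => QDA.main1 hq' nu l h, ?_, ?_⟩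
  · refine fun l nu h m x y hx => QDA.main (w := fun k => (q:ℚ) ^ k - 1)
      hq' rfl (fun m => rfl) (fun m => rfl) (fun m u hu => ?_) nu l h m x y hx
    show (if u = 0 then (1:ℚ) else if u = 1 then _ else 0) = 0
    rw [if_neg (by omega), if_neg (by omega)]
  · refine fun l nu h m x y hx => QDA.main (w := fun _ => (-1 : ℚ))
      hq' rfl (fun m => rfl) (fun m => rfl) (fun m u hu => ?_) nu l h m x y hx
    show (if u = 0 then (1:ℚ) else if u = 1 then _ else 0) = 0
    rw [if_neg (by omega), if_neg (by omega)]
end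
end

section
/- Leibniz rule for the q-derivative: for two homogeneous polynomials f(x,y;m) of degree r and g(x,y;m) of degree s (with coefficients depending on the parameter m), and for every ν ≥ 0, the ν-th q-derivative with respect to x of their q-product satisfies [f * g]^{(ν)} = Σ_{l=0}^{ν} [ν choose l]_q q^{(ν-l)(r-l)} f^{(l)} * g^{(ν-l)}. -/
noncomputable section

/-- The q-derivative with respect to `x` of a homogeneous polynomial of degree `r`,
expressed coefficientwise: the term `f_i y^i x^(r-i)` is sent to
`f_i (q^(r-i) - 1)/(q - 1) · y^i x^(r-1-i)`. -/
def qDerivP (q : ℚ) (a : QPoly) : QPoly :=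
  ⟨a.deg - 1, fun m i => (q ^ (a.deg - i) - 1) / (q - 1) * a.coeff m i⟩
section Gauss
variable {q : ℚ} (hq : 1 < q)

/-- `Fq q n = ∏_{j=1}^n (q^j - 1)`. -/
def Fq (q : ℚ) (n : ℕ) : ℚ := ∏ j ∈ Finset.range n, (q ^ (j + 1) - 1)

lemma Fq_zero : Fq q 0 = 1 := by simp [Fq]

lemma Fq_succ (n : ℕ) : Fq q (n + 1) = Fq q n * (q ^ (n + 1) - 1) := by
  rw [Fq, Finset.prod_range_succ, ← Fq]

include hq

lemma Fq_ne (n : ℕ) : Fq q n ≠ 0 := by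
  refine Finset.prod_ne_zero_iff.2 fun j _ => ?_
  have : 1 < q ^ (j + 1) := one_lt_pow₀ hq (by omega)
  linarith

omit hq in
lemma sig_succ (k : ℕ) : sig (k + 1) = sig k + k := by
  have h3 : (k + 1) * ((k + 1) - 1) = k * (k - 1) + 2 * k := by
    cases k with
    | zero => rfl
    | succ k => simp only [Nat.succ_sub_one]; ring
  have h4 : Even (k * (k - 1)) := by
    cases k with
    | zero => simp
    | succ k => simpa [Nat.succ_sub_one, mul_comm] using Nat.even_mul_succ_self k
  obtain ⟨c, hc⟩ := h4
  simp only [sig]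
  omega

lemma alphaQ_mul_Fq : ∀ k n : ℕ, k ≤ n →
    alphaQ q n k * Fq q (n - k) = q ^ sig k * Fq q n := by
  intro k
  induction k with
  | zero => intro n _; simp [alphaQ, sig]
  | succ k ih =>
    intro n h
    have hk : k ≤ n := by omega
    have hrec := ih n hk
    have hsub : n - k = (n - (k + 1)) + 1 := by omega
    have hF : Fq q (n - k) = Fq q (n - (k + 1)) * (q ^ (n - k) - 1) := by
      rw [hsub, Fq_succ, ← hsub]
    have hα : alphaQ q (n : ℤ) (k + 1) = alphaQ q n k * (q ^ (n : ℤ) - q ^ (k : ℤ)) := by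
      rw [alphaQ, Finset.prod_range_succ, ← alphaQ]
    have hsplit : (q ^ (n : ℤ) - q ^ (k : ℤ)) = q ^ k * (q ^ (n - k) - 1) := by
      have h1 : (q : ℚ) ^ (n : ℤ) = q ^ n := zpow_natCast q n
      have h2 : (q : ℚ) ^ (k : ℤ) = q ^ k := zpow_natCast q k
      rw [h1, h2, mul_sub, mul_one, ← pow_add]
      congr 2
      omega
    rw [hα, hsplit, sig_succ, pow_add]
    calc alphaQ q n k * (q ^ k * (q ^ (n - k) - 1)) * Fq q (n - (k + 1))
        = alphaQ q n k * (Fq q (n - (k + 1)) * (q ^ (n - k) - 1)) * q ^ k := by ring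
      _ = alphaQ q n k * Fq q (n - k) * q ^ k := by rw [← hF]
      _ = q ^ sig k * q ^ k * Fq q n := by rw [hrec]; ring

lemma gaussQ_eq_Fq {k n : ℕ} (h : k ≤ n) :
    gaussQ q n k = Fq q n / (Fq q k * Fq q (n - k)) := by
  have h1 := alphaQ_mul_Fq hq k n h
  have h2 := alphaQ_mul_Fq hq k k le_rfl
  rw [Nat.sub_self, Fq_zero, mul_one] at h2
  have hq0 : (q : ℚ) ^ sig k ≠ 0 := pow_ne_zero _ (by linarith)
  have hFnk := Fq_ne hq (n - k)
  have hFk := Fq_ne hq k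
  rw [gaussQ, h2]
  rw [div_eq_div_iff (mul_ne_zero hq0 hFk) (mul_ne_zero hFk hFnk)]
  linear_combination Fq q k * h1

lemma gaussQ_self (n : ℕ) : gaussQ q n n = 1 := by
  rw [gaussQ_eq_Fq hq le_rfl, Nat.sub_self, Fq_zero, mul_one, div_self (Fq_ne hq n)]

omit hq in
lemma gaussQ_zero (n : ℕ) : gaussQ q n 0 = 1 := by
  simp [gaussQ, alphaQ]

lemma gaussQ_self_succ (n : ℕ) : gaussQ q n (n + 1) = 0 := by
  have : alphaQ q n (n + 1) = 0 := by
    refine Finset.prod_eq_zero (Finset.self_mem_range_succ n) ?_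
    simp
  simp [gaussQ, this]

lemma gaussQ_pascal {k n : ℕ} (h : k ≤ n) :
    gaussQ q (n + 1) (k + 1) = gaussQ q n (k + 1) + q ^ (n - k) * gaussQ q n k := by
  rcases eq_or_lt_of_le h with rfl | hlt
  · rw [gaussQ_self_succ hq, Nat.sub_self, pow_zero, gaussQ_self hq, gaussQ_self hq]
    ring
  · have hk1 : k + 1 ≤ n := hlt
    rw [gaussQ_eq_Fq hq (by omega : k + 1 ≤ n + 1), gaussQ_eq_Fq hq hk1,
      gaussQ_eq_Fq hq h]
    have e1 : n + 1 - (k + 1) = n - k := by omega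
    have e2 : n - k = (n - (k + 1)) + 1 := by omega
    have hFnk : Fq q (n - k) = Fq q (n - (k + 1)) * (q ^ (n - k) - 1) := by
      rw [e2, Fq_succ, ← e2]
    rw [e1, Fq_succ, Fq_succ, hFnk]
    have hq0 : q ≠ 0 := by linarith
    have h1 : Fq q n ≠ 0 := Fq_ne hq n
    have h2 : Fq q k ≠ 0 := Fq_ne hq k
    have h3 : Fq q (n - (k + 1)) ≠ 0 := Fq_ne hq _
    have h4 : q ^ (k + 1) - 1 ≠ 0 := by
      have : 1 < q ^ (k + 1) := one_lt_pow₀ hq (by omega); linarith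
    have h5 : q ^ (n - k) - 1 ≠ 0 := by
      have : 1 < q ^ (n - k) := one_lt_pow₀ hq (by omega); linarith
    have hpow : q ^ (n + 1) = q ^ (n - k) * q ^ (k + 1) := by
      rw [← pow_add]; congr 1; omega
    field_simp
    rw [hpow]; ring

end Gauss

section Poly
variable {q : ℚ}

/-- Coefficients vanish above the degree. -/
def Van (a : QPoly) : Prop := ∀ (m : ℤ) (i : ℕ), a.deg < i → a.coeff m i = 0

lemma deg_qDerivP (a : QPoly) : (qDerivP q a).deg = a.deg - 1 := rfl

lemma coeff_qDerivP (a : QPoly) (m : ℤ) (i : ℕ) :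
    (qDerivP q a).coeff m i = (q ^ (a.deg - i) - 1) / (q - 1) * a.coeff m i := rfl

lemma coeff_qMul (a b : QPoly) (m : ℤ) (u : ℕ) :
    (qMul q a b).coeff m u =
      ∑ i ∈ Finset.range (u + 1), q ^ (i * b.deg) * a.coeff m i * b.coeff (m - i) (u - i) := rfl

lemma van_qDerivP {a : QPoly} (ha : Van a) : Van (qDerivP q a) := by
  intro m i hi
  have hi' : a.deg - 1 < i := hi
  rw [coeff_qDerivP]
  rcases Nat.lt_or_ge a.deg i with h | h
  · rw [ha m i h, mul_zero]
  · have h0 : a.deg - i = 0 := by omega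
    rw [h0]; simp

lemma deg_iter (a : QPoly) (l : ℕ) : ((qDerivP q)^[l] a).deg = a.deg - l := by
  induction l with
  | zero => simp
  | succ l ih => rw [Function.iterate_succ_apply', deg_qDerivP, ih, Nat.sub_sub]

lemma van_iter {a : QPoly} (ha : Van a) (l : ℕ) : Van ((qDerivP q)^[l] a) := by
  induction l with
  | zero => simpa using ha
  | succ l ih => rw [Function.iterate_succ_apply']; exact van_qDerivP ih

lemma coeff_iter (a : QPoly) (l : ℕ) (m : ℤ) (i : ℕ) :
    ((qDerivP q)^[l] a).coeff m i =
      (∏ k ∈ Finset.range l, (q ^ (a.deg - k - i) - 1) / (q - 1)) * a.coeff m i := by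
  induction l with
  | zero => simp
  | succ l ih =>
    rw [Function.iterate_succ_apply', coeff_qDerivP, deg_iter, ih,
      Finset.prod_range_succ]
    ring

lemma iter_coeff_zero {a : QPoly} (ha : Van a) {l : ℕ} (h : a.deg < l) (m : ℤ) (i : ℕ) :
    ((qDerivP q)^[l] a).coeff m i = 0 := by
  rcases Nat.lt_or_ge a.deg i with hi | hi
  · rw [coeff_iter, ha m i hi, mul_zero]
  · rw [coeff_iter]
    have hk : a.deg - i ∈ Finset.range l := by simp; omega
    have h0 : a.deg - (a.deg - i) - i = 0 := by omega
    rw [Finset.prod_eq_zero hk (by rw [h0]; simp), zero_mul]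

lemma van_qMul {a b : QPoly} (ha : Van a) (hb : Van b) : Van (qMul q a b) := by
  intro m u hu
  have hu' : a.deg + b.deg < u := hu
  rw [coeff_qMul]
  refine Finset.sum_eq_zero fun i hi => ?_
  simp only [Finset.mem_range] at hi
  rcases Nat.lt_or_ge a.deg i with h | h
  · rw [ha m i h]; ring
  · rw [hb (m - i) (u - i) (by omega)]; ring

lemma qMul_zero_left {a b : QPoly} (h : ∀ (m : ℤ) (i : ℕ), a.coeff m i = 0) (m : ℤ) (u : ℕ) :
    (qMul q a b).coeff m u = 0 := by
  rw [coeff_qMul]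
  exact Finset.sum_eq_zero fun i _ => by rw [h]; ring

lemma qMul_zero_right {a b : QPoly} (h : ∀ (m : ℤ) (i : ℕ), b.coeff m i = 0) (m : ℤ) (u : ℕ) :
    (qMul q a b).coeff m u = 0 := by
  rw [coeff_qMul]
  exact Finset.sum_eq_zero fun i _ => by rw [h]; ring

lemma qDeriv_qMul (hq : 1 < q) {a b : QPoly} (ha : Van a) (hb : Van b) (m : ℤ) (u : ℕ) :
    (qDerivP q (qMul q a b)).coeff m u =
      q ^ a.deg * (qMul q a (qDerivP q b)).coeff m u
        + (qMul q (qDerivP q a) b).coeff m u := by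
  have hq1 : q - 1 ≠ 0 := by linarith
  rw [coeff_qDerivP, coeff_qMul, coeff_qMul, coeff_qMul]
  show (q ^ ((a.deg + b.deg) - u) - 1) / (q - 1) * _ = _
  rw [Finset.mul_sum, Finset.mul_sum, ← Finset.sum_add_distrib]
  refine Finset.sum_congr rfl fun i hi => ?_
  simp only [Finset.mem_range] at hi
  rw [coeff_qDerivP, coeff_qDerivP, deg_qDerivP]
  by_cases hA : a.coeff m i = 0
  · rw [hA]; ring
  by_cases hB : b.coeff (m - i) (u - i) = 0
  · rw [hB]; ring
  have h1 : i ≤ a.deg := by by_contra h; exact hA (ha m i (by omega))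
  have h2 : u - i ≤ b.deg := by by_contra h; exact hB (hb (m - i) (u - i) (by omega))
  have h3 : i ≤ u := by omega
  have key : (q ^ ((a.deg + b.deg) - u) - 1) * q ^ (i * b.deg)
      = q ^ a.deg * q ^ (i * (b.deg - 1)) * (q ^ (b.deg - (u - i)) - 1)
        + q ^ (i * b.deg) * (q ^ (a.deg - i) - 1) := by
    obtain ⟨A, hAe⟩ : ∃ A, a.deg = i + A := ⟨a.deg - i, by omega⟩
    obtain ⟨J, hJ⟩ : ∃ J, u = i + J := ⟨u - i, by omega⟩
    have e1 : (a.deg + b.deg) - u = A + (b.deg - J) := by omega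
    have e2 : b.deg - (u - i) = b.deg - J := by omega
    have e3 : a.deg - i = A := by omega
    rcases Nat.eq_zero_or_pos b.deg with hC | hC
    · have hB0 : b.deg - J = 0 := by omega
      rw [e1, e2, e3, hAe, hB0, hC]
      simp
    · obtain ⟨d, hd⟩ : ∃ d, b.deg = d + 1 := ⟨b.deg - 1, by omega⟩
      have e4 : b.deg - 1 = d := by omega
      obtain ⟨B, hBe⟩ : ∃ B, b.deg = J + B := ⟨b.deg - J, by omega⟩
      have e5 : b.deg - J = B := by omega
      rw [e1, e2, e3, e4, e5, hAe, hd]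
      have e6 : J + B = d + 1 := by omega
      rw [← e6]
      have e7 : i * (J + B) = i * d + i := by rw [e6]; ring
      rw [e7, pow_add, pow_add, pow_add]
      ring
  field_simp
  linear_combination key

end Poly


/-- **Leibniz rule for the q-derivative**: for homogeneous polynomials `f` of degree `r`
and `g` of degree `s`, `[f * g]^(ν) = ∑_{l=0}^ν [ν l]_q q^((ν-l)(r-l)) f^(l) * g^(ν-l)`
(stated coefficientwise). -/
theorem leibniz_rule_q_derivative (q : ℕ) (hq : 2 ≤ q) (f g : QPoly)
    (hf : ∀ (m : ℤ) (i : ℕ), f.deg < i → f.coeff m i = 0)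
    (hg : ∀ (m : ℤ) (i : ℕ), g.deg < i → g.coeff m i = 0)
    (ν : ℕ) (m : ℤ) (u : ℕ) :
    ((qDerivP (q : ℚ))^[ν] (qMul (q : ℚ) f g)).coeff m u =
      ∑ l ∈ Finset.range (ν + 1),
        gaussQ (q : ℚ) ν l * (q : ℚ) ^ (((ν : ℤ) - l) * ((f.deg : ℤ) - l)) *
          (qMul (q : ℚ) ((qDerivP (q : ℚ))^[l] f) ((qDerivP (q : ℚ))^[ν - l] g)).coeff m u := by

  have hq1 : (1 : ℚ) < (q : ℚ) := by exact_mod_cast Nat.lt_of_lt_of_le Nat.one_lt_two hq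
  have hq0 : (q : ℚ) ≠ 0 := by linarith
  have hVf : Van f := hf
  have hVg : Van g := hg
  induction ν with
  | zero =>
    rw [Finset.sum_range_one, gaussQ_zero]
    simp
  | succ ν ih =>
    have step : ∀ l ∈ Finset.range (ν + 1),
        ((q:ℚ) ^ (f.deg + g.deg - ν - u) - 1) / ((q:ℚ) - 1) *
          (gaussQ (q:ℚ) ν l * (q:ℚ) ^ (((ν:ℤ) - l) * ((f.deg:ℤ) - l)) *
            (qMul (q:ℚ) ((qDerivP (q:ℚ))^[l] f) ((qDerivP (q:ℚ))^[ν - l] g)).coeff m u)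
        = gaussQ (q:ℚ) ν l * ((q:ℚ) ^ (((ν:ℤ) + 1 - l) * ((f.deg:ℤ) - l)) *
            (qMul (q:ℚ) ((qDerivP (q:ℚ))^[l] f) ((qDerivP (q:ℚ))^[ν + 1 - l] g)).coeff m u)
          + gaussQ (q:ℚ) ν l * ((q:ℚ) ^ (((ν:ℤ) - l) * ((f.deg:ℤ) - l)) *
            (qMul (q:ℚ) ((qDerivP (q:ℚ))^[l + 1] f) ((qDerivP (q:ℚ))^[ν - l] g)).coeff m u) := by
      intro l hl
      simp only [Finset.mem_range] at hl
      by_cases hlr : f.deg < l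
      · rw [qMul_zero_left (iter_coeff_zero hVf hlr),
          qMul_zero_left (iter_coeff_zero hVf (by omega : f.deg < l + 1)),
          qMul_zero_left (iter_coeff_zero hVf hlr)]
        ring
      push_neg at hlr
      by_cases hls : g.deg < ν - l
      · rw [qMul_zero_right (iter_coeff_zero hVg hls),
          qMul_zero_right (iter_coeff_zero hVg (by omega : g.deg < ν + 1 - l)),
          qMul_zero_right (iter_coeff_zero hVg hls)]
        ring
      push_neg at hls
      have hstep := qDeriv_qMul hq1 (van_iter (q := (q:ℚ)) hVf l) (van_iter (q := (q:ℚ)) hVg (ν - l)) m u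
      rw [coeff_qDerivP, deg_iter] at hstep
      have degAB : (qMul (q:ℚ) ((qDerivP (q:ℚ))^[l] f) ((qDerivP (q:ℚ))^[ν - l] g)).deg
          = f.deg + g.deg - ν := by
        show ((qDerivP (q:ℚ))^[l] f).deg + ((qDerivP (q:ℚ))^[ν - l] g).deg = _
        rw [deg_iter, deg_iter]; omega
      rw [degAB] at hstep
      have ef : qDerivP (q:ℚ) ((qDerivP (q:ℚ))^[l] f) = (qDerivP (q:ℚ))^[l + 1] f :=
        (Function.iterate_succ_apply' _ _ _).symm
      have eg : qDerivP (q:ℚ) ((qDerivP (q:ℚ))^[ν - l] g) = (qDerivP (q:ℚ))^[ν - l + 1] g :=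
        (Function.iterate_succ_apply' _ _ _).symm
      rw [ef, eg] at hstep
      have e1 : ν - l + 1 = ν + 1 - l := by omega
      rw [e1] at hstep
      have hzp : (q:ℚ) ^ (((ν:ℤ) - l) * ((f.deg:ℤ) - l)) * (q:ℚ) ^ (f.deg - l)
          = (q:ℚ) ^ (((ν:ℤ) + 1 - l) * ((f.deg:ℤ) - l)) := by
        have hc : ((q:ℚ)) ^ (f.deg - l) = (q:ℚ) ^ (((f.deg:ℤ) - l)) := by
          rw [← zpow_natCast, Nat.cast_sub hlr]
        rw [hc, ← zpow_add₀ hq0]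
        congr 1
        ring
      linear_combination (gaussQ (q:ℚ) ν l * (q:ℚ) ^ (((ν:ℤ) - l) * ((f.deg:ℤ) - l))) * hstep
        + (gaussQ (q:ℚ) ν l *
            (qMul (q:ℚ) ((qDerivP (q:ℚ))^[l] f) ((qDerivP (q:ℚ))^[ν + 1 - l] g)).coeff m u) * hzp
    rw [Function.iterate_succ_apply', coeff_qDerivP, deg_iter]
    rw [show (qMul (q:ℚ) f g).deg = f.deg + g.deg from rfl]
    rw [ih, Finset.mul_sum, Finset.sum_congr rfl step, Finset.sum_add_distrib]
    -- RHS: peel off the l = 0 term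
    rw [Finset.sum_range_succ' _ (ν + 1)]
    have pas : ∀ k ∈ Finset.range (ν + 1),
        gaussQ (q:ℚ) (ν + 1) (k + 1) *
            (q:ℚ) ^ (((↑(ν + 1):ℤ) - ↑(k + 1)) * ((f.deg:ℤ) - ↑(k + 1))) *
            (qMul (q:ℚ) ((qDerivP (q:ℚ))^[k + 1] f)
              ((qDerivP (q:ℚ))^[ν + 1 - (k + 1)] g)).coeff m u
        = gaussQ (q:ℚ) ν (k + 1) * ((q:ℚ) ^ (((ν:ℤ) + 1 - ↑(k + 1)) * ((f.deg:ℤ) - ↑(k + 1))) *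
            (qMul (q:ℚ) ((qDerivP (q:ℚ))^[k + 1] f)
              ((qDerivP (q:ℚ))^[ν + 1 - (k + 1)] g)).coeff m u)
          + gaussQ (q:ℚ) ν k * ((q:ℚ) ^ (((ν:ℤ) - k) * ((f.deg:ℤ) - k)) *
            (qMul (q:ℚ) ((qDerivP (q:ℚ))^[k + 1] f)
              ((qDerivP (q:ℚ))^[ν - k] g)).coeff m u) := by
      intro k hk
      simp only [Finset.mem_range] at hk
      have hkν : k ≤ ν := by omega
      rw [gaussQ_pascal hq1 hkν]
      have e2 : ν + 1 - (k + 1) = ν - k := by omega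
      rw [e2]
      have hzp2 : (q:ℚ) ^ (ν - k) * (q:ℚ) ^ (((↑(ν + 1):ℤ) - ↑(k + 1)) * ((f.deg:ℤ) - ↑(k + 1)))
          = (q:ℚ) ^ (((ν:ℤ) - k) * ((f.deg:ℤ) - k)) := by
        have hc : ((q:ℚ)) ^ (ν - k) = (q:ℚ) ^ (((ν:ℤ) - k)) := by
          rw [← zpow_natCast, Nat.cast_sub hkν]
        rw [hc, ← zpow_add₀ hq0]
        congr 1
        push_cast
        ring
      have e3 : ((↑(ν + 1):ℤ) - ↑(k + 1)) * ((f.deg:ℤ) - ↑(k + 1))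
          = (((ν:ℤ) + 1 - ↑(k + 1)) * ((f.deg:ℤ) - ↑(k + 1))) := by push_cast; ring
      rw [← hzp2, ← e3]
      ring
    rw [Finset.sum_congr rfl pas, Finset.sum_add_distrib]
    -- now match the three pieces
    have hzero : gaussQ (q:ℚ) ν (ν + 1) * ((q:ℚ) ^ (((ν:ℤ) + 1 - ↑(ν + 1)) * ((f.deg:ℤ) - ↑(ν + 1))) *
        (qMul (q:ℚ) ((qDerivP (q:ℚ))^[ν + 1] f)
          ((qDerivP (q:ℚ))^[ν + 1 - (ν + 1)] g)).coeff m u) = 0 := by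
      rw [gaussQ_self_succ hq1]
      ring
    have hB : ∀ B : ℕ → ℚ, B (ν + 1) = 0 →
        ∑ l ∈ Finset.range (ν + 1), B l
          = (∑ k ∈ Finset.range (ν + 1), B (k + 1)) + B 0 := by
      intro B hB0
      have h1 := Finset.sum_range_succ' B (ν + 1)
      have h2 := Finset.sum_range_succ B (ν + 1)
      rw [hB0, add_zero] at h2
      rw [← h2, h1]
    have h3 := hB (fun l => gaussQ (q:ℚ) ν l *
        ((q:ℚ) ^ (((ν:ℤ) + 1 - (l:ℤ)) * ((f.deg:ℤ) - (l:ℤ))) *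
          (qMul (q:ℚ) ((qDerivP (q:ℚ))^[l] f) ((qDerivP (q:ℚ))^[ν + 1 - l] g)).coeff m u)) hzero
    have hA0 : gaussQ (q:ℚ) (ν + 1) 0 *
          (q:ℚ) ^ (((↑(ν + 1):ℤ) - ((0:ℕ):ℤ)) * ((f.deg:ℤ) - ((0:ℕ):ℤ))) *
          (qMul (q:ℚ) ((qDerivP (q:ℚ))^[0] f) ((qDerivP (q:ℚ))^[ν + 1 - 0] g)).coeff m u
        = gaussQ (q:ℚ) ν 0 *
          ((q:ℚ) ^ (((ν:ℤ) + 1 - ((0:ℕ):ℤ)) * ((f.deg:ℤ) - ((0:ℕ):ℤ))) *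
          (qMul (q:ℚ) ((qDerivP (q:ℚ))^[0] f) ((qDerivP (q:ℚ))^[ν + 1 - 0] g)).coeff m u) := by
      rw [gaussQ_zero, gaussQ_zero]
      push_cast
      ring
    linear_combination h3 - hA0
end
end

section
/- Let C be an (n,k) linear code over GF(q^m) with rank weight distribution (A_i), and let d' be the minimum rank distance of C^⊥. If 0 ≤ ν < d', then Σ_{i=0}^{n-ν} [n-i choose ν]_q A_i = q^{m(k-ν)} [n choose ν]_q. -/
/-!
Double counting of pairs `(c, y)` with `c ∈ C` and `y` a linearly independent `ν`-tuple of
vectors of `GF(q)^n` such that `∑ₜ y_j(t) c(t) = 0` for all `j`.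

For fixed `y` these `c` form the kernel of `c ↦ (⟨y_j, c⟩)_j : C → GF(q^m)^ν`. This map is onto:
otherwise a nonzero functional `λ` kills its image, and `u = ∑ⱼ λ_j y_j` is a dual codeword,
nonzero because the `y_j` stay independent over `GF(q^m)`, whose coordinates lie in the
`GF(q)`-span of the `λ_j`, so `rk u ≤ ν < d'`. Hence there are `q^(m(k-ν))` such `c`.

For fixed `c` the admissible `y` are the independent `ν`-tuples in the kernel of
`t ↦ ∑ t_i c_i`, a `GF(q)`-space of dimension `n - rk c`, so there are `α(n - rk c, ν)` of them.
Thus `∑_c α(n - rk c, ν) = q^(m(k-ν)) α(n, ν)`; grouping by rank and dividing by `α(ν, ν)`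
gives the identity.
-/

noncomputable section

open Module

theorem alphaQ_natCast_eq_zero_of_lt (q : ℚ) {s ν : ℕ} (h : s < ν) : alphaQ q s ν = 0 :=
  Finset.prod_eq_zero (Finset.mem_range.2 h) (sub_self _)

theorem gaussQ_eq_zero_of_lt (q : ℚ) {a b : ℕ} (h : a < b) : gaussQ q a b = 0 := by
  rw [gaussQ, alphaQ_natCast_eq_zero_of_lt q h, zero_div]

theorem card_linearIndependent_eq_alphaQ {K V : Type*} [Field K] [Fintype K] [AddCommGroup V]
    [Module K V] [Finite V] (ν : ℕ) :
    (Nat.card {v : Fin ν → V // LinearIndependent K v} : ℚ) =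
      alphaQ (Fintype.card K) (finrank K V) ν := by
  rcases le_or_gt ν (finrank K V) with hν | hν
  · rw [card_linearIndependent hν, alphaQ, ← Fin.prod_univ_eq_prod_range, Nat.cast_prod]
    refine Finset.prod_congr rfl fun i _ => ?_
    have hpow : Fintype.card K ^ (i : ℕ) ≤ Fintype.card K ^ finrank K V :=
      Nat.pow_le_pow_right Fintype.card_pos (by omega)
    push_cast [Nat.cast_sub hpow, zpow_natCast]
    rfl
  · have : IsEmpty {v : Fin ν → V // LinearIndependent K v} :=
      ⟨fun v => by have := v.2.fintype_card_le_finrank; simp at this; omega⟩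
    rw [alphaQ_natCast_eq_zero_of_lt _ hν, Nat.card_of_isEmpty, Nat.cast_zero]

theorem card_linearIndependent_forall_mem {R V ι : Type*} [Ring R] [AddCommGroup V]
    [Module R V] (W : Submodule R V) :
    Nat.card {v : ι → V // LinearIndependent R v ∧ ∀ i, v i ∈ W} =
      Nat.card {w : ι → W // LinearIndependent R w} :=
  Nat.card_congr
    { toFun v := ⟨fun i => ⟨v.1 i, v.2.2 i⟩, v.2.1.of_comp W.subtype⟩
      invFun w := ⟨fun i => w.1 i, w.2.map' W.subtype W.ker_subtype, fun i => (w.1 i).2⟩ }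

theorem card_ker_of_surjective {F V W : Type*} [Field F] [AddCommGroup V] [Module F V]
    [Module.Finite F V] [AddCommGroup W] [Module F W] {f : V →ₗ[F] W}
    (hf : Function.Surjective f) :
    (Nat.card (LinearMap.ker f) : ℚ) =
      (Nat.card F : ℚ) ^ ((finrank F V : ℤ) - finrank F W) := by
  have h := LinearMap.finrank_range_add_finrank_ker f
  rw [LinearMap.range_eq_top.2 hf, finrank_top] at h
  rw [Module.natCard_eq_pow_finrank (K := F), ← h]
  push_cast
  rw [add_sub_cancel_left, zpow_natCast]

section RankWeight

variable {K L : Type*} [Field K] [Field L] [Algebra K L] {n : ℕ}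

open Matrix

theorem rankWeight_le (c : Fin n → L) : rankWeight K c ≤ n :=
  (finrank_range_le_card c).trans_eq (Fintype.card_fin n)

theorem finrank_ker_linearCombination (c : Fin n → L) :
    finrank K (LinearMap.ker (Fintype.linearCombination K c)) = n - rankWeight K c := by
  have h := LinearMap.finrank_range_add_finrank_ker (Fintype.linearCombination K c)
  rw [Fintype.range_linearCombination, Module.finrank_fin_fun] at h
  unfold rankWeight
  omega

theorem rankWeight_vecMul_le {ι : Type*} [Fintype ι] (a : ι → L) (y : ι → Fin n → K) :
    rankWeight K (a ᵥ* Matrix.of fun i => algebraMap K L ∘ y i) ≤ Fintype.card ι := by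
  have := Module.Finite.span_of_finite K (Set.finite_range a)
  refine (Submodule.finrank_mono ?_).trans (finrank_range_le_card a)
  rw [Submodule.span_le]
  rintro _ ⟨t, rfl⟩
  have hentry : (a ᵥ* Matrix.of fun i => algebraMap K L ∘ y i) t = ∑ i, y i t • a i := by
    simp [vecMul, dotProduct, Algebra.smul_def, mul_comm]
  rw [hentry]
  exact Submodule.sum_mem _ fun i _ => Submodule.smul_mem _ _ (Submodule.subset_span ⟨i, rfl⟩)

def pairingMap {ι : Type*} (C : Submodule L (Fin n → L)) (y : ι → Fin n → K) :
    C →ₗ[L] ι → L :=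
  (Matrix.of fun i => algebraMap K L ∘ y i).mulVecLin ∘ₗ C.subtype

theorem pairingMap_eq_zero_iff {ι : Type*} (C : Submodule L (Fin n → L)) (y : ι → Fin n → K)
    (c : C) :
    pairingMap C y c = 0 ↔
      ∀ i, y i ∈ LinearMap.ker (Fintype.linearCombination K (c : Fin n → L)) := by
  simp only [funext_iff, LinearMap.mem_ker, Fintype.linearCombination_apply, Algebra.smul_def]
  rfl

theorem pairingMap_surjective {ι : Type*} [Fintype ι] (C : Submodule L (Fin n → L))
    {y : ι → Fin n → K} (hy : LinearIndependent K y)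
    (hC : ∀ u : Fin n → L, (∀ v ∈ C, u ⬝ᵥ v = 0) → u ≠ 0 → Fintype.card ι < rankWeight K u) :
    Function.Surjective (pairingMap C y) := by
  classical
  set Y : Matrix ι (Fin n) L := Matrix.of fun i => algebraMap K L ∘ y i
  by_contra hns
  obtain ⟨φ, hφ0, hφ⟩ := (LinearMap.range (pairingMap C y)).exists_le_ker_of_lt_top
    (lt_top_iff_ne_top.2 (mt LinearMap.range_eq_top.1 hns))
  set a : ι → L := fun i => φ (Pi.single i 1)
  have hφa : ∀ x, φ x = a ⬝ᵥ x := by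
    intro x
    conv_lhs => rw [pi_eq_sum_univ' x]
    simp [a, dotProduct, mul_comm]
  have ha : a ≠ 0 := fun ha => hφ0 (LinearMap.ext fun x => by simp [hφa, ha])
  have hdual : ∀ v ∈ C, (a ᵥ* Y) ⬝ᵥ v = 0 := fun v hv => by
    rw [← dotProduct_mulVec, ← hφa]
    exact hφ ⟨⟨v, hv⟩, rfl⟩
  have hY : LinearIndependent L Y.row := linearIndependent_algebraMap_comp_iff.2 hy
  have hu0 : a ᵥ* Y ≠ 0 := fun h =>
    ha (Matrix.vecMul_injective_iff.2 hY (h.trans (Matrix.zero_vecMul Y).symm))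
  exact (hC _ hdual hu0).not_ge (rankWeight_vecMul_le a y)

theorem sum_alphaQ_rankWeight [Fintype K] [Finite L] (C : Submodule L (Fin n → L)) [Fintype C]
    (ν : ℕ) (hC : ∀ u : Fin n → L, (∀ v ∈ C, u ⬝ᵥ v = 0) → u ≠ 0 → ν < rankWeight K u) :
    ∑ c : C, alphaQ (Fintype.card K) ((n - rankWeight K (c : Fin n → L) : ℕ) : ℤ) ν =
      (Nat.card L : ℚ) ^ ((finrank L C : ℤ) - ν) * alphaQ (Fintype.card K) n ν := by
  classical
  set T := Finset.univ.filter fun y : Fin ν → Fin n → K => LinearIndependent K y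
  have hT : (T.card : ℚ) = alphaQ (Fintype.card K) n ν := by
    have h := card_linearIndependent_eq_alphaQ (K := K) (V := Fin n → K) ν
    rwa [finrank_fin_fun, Nat.card_eq_fintype_card, Fintype.card_subtype] at h
  have hfiber_code : ∀ c : C, ((T.filter fun y => pairingMap C y c = 0).card : ℚ) =
      alphaQ (Fintype.card K) ((n - rankWeight K (c : Fin n → L) : ℕ) : ℤ) ν := by
    intro c
    rw [← finrank_ker_linearCombination, ← card_linearIndependent_eq_alphaQ,
      ← card_linearIndependent_forall_mem, Nat.card_eq_fintype_card, Fintype.card_subtype,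
      Finset.filter_filter]
    simp_rw [pairingMap_eq_zero_iff]
  have hfiber_tuple : ∀ y ∈ T,
      ((Finset.univ.filter fun c : C => pairingMap C y c = 0).card : ℚ) =
        (Nat.card L : ℚ) ^ ((finrank L C : ℤ) - ν) := by
    intro y hy
    have hsurj := pairingMap_surjective C (Finset.mem_filter.1 hy).2 (by simpa using hC)
    have h := card_ker_of_surjective hsurj
    rw [finrank_fin_fun, Nat.card_eq_fintype_card, Fintype.card_subtype] at h
    simpa only [LinearMap.mem_ker] using h
  calc ∑ c : C, alphaQ (Fintype.card K) ((n - rankWeight K (c : Fin n → L) : ℕ) : ℤ) ν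
      = ∑ c : C, ((T.filter fun y => pairingMap C y c = 0).card : ℚ) :=
        Finset.sum_congr rfl fun c _ => (hfiber_code c).symm
    _ = ∑ y ∈ T, ((Finset.univ.filter fun c : C => pairingMap C y c = 0).card : ℚ) := by
        exact_mod_cast Finset.sum_card_bipartiteAbove_eq_sum_card_bipartiteBelow
          (fun (c : C) (y : Fin ν → Fin n → K) => pairingMap C y c = 0)
    _ = _ := by
        rw [Finset.sum_congr rfl hfiber_tuple, Finset.sum_const, nsmul_eq_mul, hT, mul_comm]

theorem sum_comp_rankWeight {M : Type*} [AddCommMonoid M] (C : Submodule L (Fin n → L))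
    [Fintype C] (f : ℕ → M) :
    ∑ c : C, f (rankWeight K (c : Fin n → L)) =
      ∑ i ∈ Finset.range (n + 1),
        Nat.card {c : Fin n → L // c ∈ C ∧ rankWeight K c = i} • f i := by
  classical
  rw [← Finset.sum_fiberwise_of_maps_to (g := fun c : C => rankWeight K (c : Fin n → L))
    fun c _ => Finset.mem_range.2 (Nat.lt_succ_of_le (rankWeight_le _))]
  refine Finset.sum_congr rfl fun i _ => ?_
  rw [Finset.sum_congr rfl fun c hc => congrArg f (Finset.mem_filter.1 hc).2, Finset.sum_const,
    ← Fintype.card_subtype, ← Nat.card_eq_fintype_card,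
    Nat.card_congr (Equiv.subtypeSubtypeEquivSubtypeInter (· ∈ C) (rankWeight K · = i))]

end RankWeight

/-- If `ν` is less than the minimum rank distance of the dual code, then
`∑_{i=0}^{n-ν} [n-i, ν]_q A_i = q^(m(k-ν)) [n ν]_q`. -/
theorem rank_distribution_binomial_moment_below_dual_distance
    (Fq Fqm : Type*) [Field Fq] [Field Fqm] [Fintype Fq] [Fintype Fqm] [Algebra Fq Fqm]
    (q m n k : ℕ) (hq : Fintype.card Fq = q) (hm : Module.finrank Fq Fqm = m)
    (C : Submodule Fqm (Fin n → Fqm)) (hk : Module.finrank Fqm C = k)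
    (A : ℕ → ℕ)
    (hA : ∀ i, A i = Nat.card {c : Fin n → Fqm // c ∈ C ∧ rankWeight Fq c = i})
    (ν : ℕ)
    (hν : ν < sInf {i : ℕ | ∃ u : Fin n → Fqm,
        (∀ v ∈ C, ∑ t, u t * v t = 0) ∧ u ≠ 0 ∧ rankWeight Fq u = i}) :
    ∑ i ∈ Finset.range (n - ν + 1), gaussQ q (n - i) ν * (A i : ℚ) =
      (q : ℚ) ^ ((m : ℤ) * ((k : ℤ) - ν)) * gaussQ q n ν := by
  have : Fintype C := Fintype.ofFinite C
  have hcount := sum_alphaQ_rankWeight C ν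
    fun u hu hu0 => hν.trans_le (Nat.sInf_le ⟨u, hu, hu0, rfl⟩)
  rw [sum_comp_rankWeight C fun i => alphaQ (Fintype.card Fq) ((n - i : ℕ) : ℤ) ν] at hcount
  simp only [← hA, nsmul_eq_mul] at hcount
  rw [Nat.card_eq_fintype_card, Module.card_eq_pow_finrank (K := Fq) (V := Fqm), hq, hm,
    hk] at hcount
  calc ∑ i ∈ Finset.range (n - ν + 1), gaussQ q (n - i) ν * (A i : ℚ)
      = ∑ i ∈ Finset.range (n + 1), gaussQ q (n - i) ν * (A i : ℚ) :=
        Finset.sum_subset (Finset.range_subset_range.2 (by omega)) fun i hi hi' => by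
          rw [Finset.mem_range] at hi hi'
          rw [gaussQ_eq_zero_of_lt _ (by omega), zero_mul]
    _ = (∑ i ∈ Finset.range (n + 1), (A i : ℚ) * alphaQ q ((n - i : ℕ) : ℤ) ν) /
          alphaQ q ν ν := by
        rw [Finset.sum_div]
        exact Finset.sum_congr rfl fun i _ => by rw [gaussQ]; ring
    _ = (q : ℚ) ^ ((m : ℤ) * ((k : ℤ) - ν)) * gaussQ q n ν := by
        rw [hcount, gaussQ, zpow_mul, zpow_natCast]
        push_cast
        ring
end
end
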